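/- In the Clifford Hayden–Preskill protocol with local Pauli-Z measurements on D and \overline{D}, the probability of obtaining outcome strings m ∈ F_2^{n_D} on D and \overline{m} ∈ F_2^{n_D} on \overline{D} is (1/d_D)·(1/d_A^2)·N_s, where s = m + \overline{m} (mod 2) and N_s is the number of Pauli operators P_A with Λ_Z(P_A) = s. -/

import Mathlib

open Matrix Kronecker BigOperators

/-- The `n`-qubit Pauli operator `X^x Z^z` (symplectic representation). -/
noncomputable def pauli {n : ℕ} (x z : Fin n → ZMod 2) :
    Matrix (Fin n → ZMod 2) (Fin n → ZMod 2) ℂ :=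
  fun j k => if j = k + x then ((-1 : ℂ)) ^ (∑ i, (z i * k i).val) else 0

/-- The single-qubit `Z` operator on qubit `j` of an `n`-qubit system. -/
noncomputable def zOp {n : ℕ} (j : Fin n) :
    Matrix (Fin n → ZMod 2) (Fin n → ZMod 2) ℂ :=
  pauli 0 (Pi.single j 1)

/-- The Yoshida–Kitaev doubled Hayden–Preskill state, registers
`(R,(C,D),(D̄,C̄),R̄)`. -/
noncomputable def psiYK (nA nB nC nD : ℕ)
    (U : Matrix ((Fin nC → ZMod 2) × (Fin nD → ZMod 2))
      ((Fin nA → ZMod 2) × (Fin nB → ZMod 2)) ℂ)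
    (r : Fin nA → ZMod 2) (cd : (Fin nC → ZMod 2) × (Fin nD → ZMod 2))
    (dc : (Fin nD → ZMod 2) × (Fin nC → ZMod 2)) (rb : Fin nA → ZMod 2) : ℂ :=
  ((2 ^ nA : ℂ) * (Real.sqrt (2 ^ nB) : ℂ))⁻¹ *
    ∑ b : Fin nB → ZMod 2,
      U cd (r, b) * (starRingEnd ℂ) (U (dc.2, dc.1) (rb, b))

/-!
For fixed `c, c̄`, the amplitudes `ψ(r, c m, m̄ c̄, r̄)` form an `A × A` matrix whose Pauli
coefficients `∑ P_{r r̄} ψ(r, …, r̄)` are, up to normalisation, the entries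
`⟨c m| U (P ⊗ 1) U† |c̄ m̄⟩`. The `d_A²` Paulis are orthogonal,
`∑_P P_{ij} conj P_{kl} = d_A δ_{ik} δ_{jl}`, so by Parseval the outcome probability is
`d_A⁻¹ ∑_P ∑_{c,c̄} |⟨c m| U P U† |c̄ m̄⟩|²` (times the normalisation of `ψ`). For Clifford `U`,
`U P U† = c_P · P_C ⊗ P_D` with `|c_P| = 1`: summing over `c, c̄` gives `d_C`, and
`|⟨m| P_D |m̄⟩|²` is the indicator of `x_D = m + m̄`, where `x_D` is the `X`-part of `P_D`, i.e.
its pattern of anticommutation with the `Z_j`. Unitarity gives `d_C d_D = d_A d_B`.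
-/

lemma neg_one_pow_val_add {R : Type*} [Ring R] (a b : ZMod 2) :
    (-1 : R) ^ (a + b).val = (-1) ^ a.val * (-1) ^ b.val := by
  rw [← pow_add, ZMod.val_add, ← neg_one_pow_eq_pow_mod_two]

lemma neg_one_pow_val_eq_one_iff (a : ZMod 2) : (-1 : ℂ) ^ a.val = 1 ↔ a = 0 := by
  rcases (by decide : ∀ a : ZMod 2, a = 0 ∨ a = 1) a with rfl | rfl
  · simp
  · norm_num [show (1 : ZMod 2).val = 1 from rfl]

lemma sub_eq_add_of_zmod_two {ι : Type*} (a b : ι → ZMod 2) : a - b = a + b :=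
  funext fun i => CharTwo.sub_eq_add (a i) (b i)

lemma ofReal_sum_normSq {ι : Type*} [Fintype ι] (v : ι → ℂ) :
    ((∑ i, Complex.normSq (v i) : ℝ) : ℂ) = star v ⬝ᵥ v := by
  simp [dotProduct, ← Complex.mul_conj, mul_comm]

lemma sum_normSq_mulVec {κ ι : Type*} [Fintype κ] [Fintype ι] [DecidableEq ι]
    (P : Matrix κ ι ℂ) (c : ℝ) (hP : Pᴴ * P = (c : ℂ) • 1) (v : ι → ℂ) :
    ∑ k, Complex.normSq ((P *ᵥ v) k) = c * ∑ i, Complex.normSq (v i) := by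
  apply Complex.ofReal_injective
  rw [Complex.ofReal_mul, ofReal_sum_normSq, ofReal_sum_normSq, star_mulVec, ← dotProduct_mulVec,
    mulVec_mulVec, hP, smul_mulVec, one_mulVec, dotProduct_smul, smul_eq_mul]

lemma mul_kronecker_one_mul_conjTranspose_apply {κ α β R : Type*} [Fintype α] [Fintype β]
    [DecidableEq β] [CommSemiring R] [StarRing R] (U : Matrix κ (α × β) R) (P : Matrix α α R)
    (k k' : κ) :
    (U * (P ⊗ₖ (1 : Matrix β β R)) * Uᴴ) k k'
      = ∑ a, ∑ a', P a a' * ∑ b, U k (a, b) * star (U k' (a', b)) := by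
  simp only [mul_apply, Fintype.sum_prod_type, kroneckerMap_apply, one_apply, mul_ite, mul_one,
    mul_zero, Finset.sum_ite_eq', Finset.mem_univ, if_true, conjTranspose_apply, Finset.sum_mul,
    Finset.mul_sum]
  rw [Finset.sum_comm_cycle]
  refine Finset.sum_congr rfl fun _ _ => Finset.sum_congr rfl fun _ _ =>
    Finset.sum_congr rfl fun _ _ => by ring

section Pauli

variable {n : ℕ}

lemma pauli_apply (x z i j : Fin n → ZMod 2) :
    pauli x z i j = if i = j + x then (-1 : ℂ) ^ (z ⬝ᵥ j).val else 0 := by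
  have hparity : (∑ k, (z k * j k).val) % 2 = (z ⬝ᵥ j).val := by
    rw [← ZMod.val_natCast]
    push_cast [ZMod.natCast_val, ZMod.cast_id]
    rfl
  rw [pauli, neg_one_pow_eq_pow_mod_two, hparity]

lemma star_pauli_apply (x z i j : Fin n → ZMod 2) : star (pauli x z i j) = pauli x z i j := by
  rw [pauli_apply]
  split_ifs <;> simp

lemma normSq_pauli_apply (x z i j : Fin n → ZMod 2) :
    Complex.normSq (pauli x z i j) = if i = j + x then 1 else 0 := by
  rw [pauli_apply]
  split_ifs <;> simp

lemma sum_sum_normSq_pauli_apply (x z : Fin n → ZMod 2) :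
    ∑ i, ∑ j, Complex.normSq (pauli x z i j) = 2 ^ n := by
  simp_rw [normSq_pauli_apply, ← sub_eq_iff_eq_add, eq_comm (a := _ - x)]
  simp

lemma sum_neg_one_pow_dotProduct (k : Fin n → ZMod 2) :
    ∑ z : Fin n → ZMod 2, (-1 : ℂ) ^ (z ⬝ᵥ k).val = if k = 0 then 2 ^ n else 0 := by
  split_ifs with hk
  · simp [hk]
  obtain ⟨i, hi⟩ : ∃ i, k i ≠ 0 := Function.ne_iff.mp hk
  have hki : k i = 1 := (by decide : ∀ a : ZMod 2, a ≠ 0 → a = 1) _ hi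
  -- translating `z` by `Pi.single i 1` flips every sign
  have hflip : ∑ z : Fin n → ZMod 2, (-1 : ℂ) ^ (z ⬝ᵥ k).val
      = -∑ z : Fin n → ZMod 2, (-1 : ℂ) ^ (z ⬝ᵥ k).val := by
    conv_lhs => rw [← Equiv.sum_comp (Equiv.addRight (Pi.single i 1))]
    rw [← Finset.sum_neg_distrib]
    refine Finset.sum_congr rfl fun z _ => ?_
    rw [Equiv.coe_addRight, add_dotProduct, neg_one_pow_val_add, single_dotProduct, one_mul, hki,
      show (1 : ZMod 2).val = 1 from rfl, pow_one, mul_neg_one]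
  linear_combination hflip / 2

lemma sum_star_pauli_mul_pauli (i j k l : Fin n → ZMod 2) :
    ∑ x, ∑ z, star (pauli x z i j) * pauli x z k l
      = if i = k ∧ j = l then (2 : ℂ) ^ n else 0 := by
  have hz : ∀ x, ∑ z, star (pauli x z i j) * pauli x z k l
      = if (i = k ∧ j = l) ∧ x = i - j then (2 : ℂ) ^ n else 0 := by
    intro x
    have hcond : (i = j + x ∧ k = l + x ∧ j = l) ↔ ((i = k ∧ j = l) ∧ x = i - j) := by
      constructor
      · rintro ⟨rfl, rfl, rfl⟩; simp
      · rintro ⟨⟨rfl, rfl⟩, rfl⟩; simp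
    simp_rw [star_pauli_apply, pauli_apply, ite_mul, zero_mul, mul_ite, mul_zero,
      ← neg_one_pow_val_add, ← dotProduct_add]
    rw [← if_congr hcond rfl rfl]
    by_cases hi : i = j + x
    · by_cases hk : k = l + x
      · simp only [hi, hk, true_and, if_true, sum_neg_one_pow_dotProduct,
          ← sub_eq_add_of_zmod_two, sub_eq_zero]
      · simp [hk]
    · simp [hi]
  rw [Finset.sum_congr rfl fun x _ => hz x]
  simp only [ite_and]
  split_ifs <;> simp

lemma sum_normSq_sum_pauli_mul (M : Matrix (Fin n → ZMod 2) (Fin n → ZMod 2) ℂ) :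
    ∑ x, ∑ z, Complex.normSq (∑ i, ∑ j, pauli x z i j * M i j)
      = 2 ^ n * ∑ i, ∑ j, Complex.normSq (M i j) := by
  let P : Matrix ((Fin n → ZMod 2) × (Fin n → ZMod 2)) ((Fin n → ZMod 2) × (Fin n → ZMod 2)) ℂ :=
    of fun p q => pauli p.1 p.2 q.1 q.2
  have hP : Pᴴ * P = ((2 ^ n : ℝ) : ℂ) • 1 := by
    ext q r
    simpa [P, mul_apply, Fintype.sum_prod_type, one_apply, Prod.ext_iff] using
      sum_star_pauli_mul_pauli q.1 q.2 r.1 r.2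
  simpa [P, mulVec, dotProduct, Fintype.sum_prod_type] using
    sum_normSq_mulVec P _ hP (fun q => M q.1 q.2)

lemma sum_normSq_mul_pauli_kronecker_one_mul_conjTranspose_apply {κ β : Type*} [Fintype β]
    [DecidableEq β]
    (U : Matrix κ ((Fin n → ZMod 2) × β) ℂ) (k k' : κ) :
    ∑ x : Fin n → ZMod 2, ∑ z : Fin n → ZMod 2,
        Complex.normSq ((U * (pauli x z ⊗ₖ (1 : Matrix β β ℂ)) * Uᴴ) k k')
      = 2 ^ n * ∑ a, ∑ a', Complex.normSq (∑ b, U k (a, b) * star (U k' (a', b))) := by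
  simp_rw [mul_kronecker_one_mul_conjTranspose_apply]
  exact sum_normSq_sum_pauli_mul _

lemma eq_apply_of_pauli_mul_zOp (x z : Fin n → ZMod 2) (j : Fin n) (t : ZMod 2)
    (h : pauli x z * zOp j = (-1 : ℂ) ^ t.val • (zOp j * pauli x z)) : t = x j := by
  have hx0 := congrFun (congrFun h x) 0
  simp only [zOp, mul_apply, pauli_apply, right_eq_add, add_zero, dotProduct_zero, ZMod.val_zero,
    pow_zero, mul_ite, mul_one, mul_zero, Finset.sum_ite_eq', Finset.mem_univ, if_true,
    Matrix.smul_apply, single_dotProduct, one_mul, zero_add, smul_eq_mul] at hx0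
  rwa [← neg_one_pow_val_add, eq_comm, neg_one_pow_val_eq_one_iff, CharTwo.add_eq_zero] at hx0

end Pauli

lemma sum_normSq_smul_pauli_kronecker_pauli_apply {nC nD : ℕ} (c : ℂ) (hc : ‖c‖ = 1)
    (xc zc : Fin nC → ZMod 2) (xd zd m mb : Fin nD → ZMod 2) :
    ∑ cc, ∑ cb, Complex.normSq ((c • (pauli xc zc ⊗ₖ pauli xd zd)) (cc, m) (cb, mb))
      = 2 ^ nC * if xd = m + mb then 1 else 0 := by
  have hc' : Complex.normSq c = 1 := by rw [Complex.normSq_eq_norm_sq, hc, one_pow]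
  have hm : m = mb + xd ↔ xd = m + mb := by
    rw [← sub_eq_iff_eq_add', sub_eq_add_of_zmod_two, eq_comm]
  simp only [Matrix.smul_apply, kroneckerMap_apply, smul_eq_mul, map_mul, hc', one_mul,
    ← Finset.sum_mul]
  rw [sum_sum_normSq_pauli_apply, normSq_pauli_apply, if_congr hm rfl rfl]

section psiYK

variable {nA nB nC nD : ℕ}
  (U : Matrix ((Fin nC → ZMod 2) × (Fin nD → ZMod 2)) ((Fin nA → ZMod 2) × (Fin nB → ZMod 2)) ℂ)

lemma normSq_psiYK (r rb : Fin nA → ZMod 2) (cc cb : Fin nC → ZMod 2) (d d' : Fin nD → ZMod 2) :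
    Complex.normSq (psiYK nA nB nC nD U r (cc, d) (d', cb) rb)
      = ((2 ^ nA) ^ 2 * 2 ^ nB)⁻¹ *
        Complex.normSq (∑ b, U (cc, d) (r, b) * star (U (cb, d') (rb, b))) := by
  have hnorm : Complex.normSq ((2 ^ nA : ℂ) * (Real.sqrt (2 ^ nB) : ℂ))⁻¹
      = ((2 ^ nA) ^ 2 * 2 ^ nB)⁻¹ := by
    simp [Complex.normSq_ofReal, mul_pow, sq]
  rw [psiYK, Complex.normSq_mul, hnorm]
  rfl

lemma sum_normSq_psiYK (m mb : Fin nD → ZMod 2) :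
    ∑ r : Fin nA → ZMod 2, ∑ cc : Fin nC → ZMod 2, ∑ cb : Fin nC → ZMod 2,
      ∑ rb : Fin nA → ZMod 2, Complex.normSq (psiYK nA nB nC nD U r (cc, m) (mb, cb) rb)
      = ((2 ^ nA) ^ 3 * 2 ^ nB)⁻¹ * ∑ x : Fin nA → ZMod 2, ∑ z : Fin nA → ZMod 2,
        ∑ cc : Fin nC → ZMod 2, ∑ cb : Fin nC → ZMod 2, Complex.normSq
          ((U * (pauli x z ⊗ₖ (1 : Matrix (Fin nB → ZMod 2) (Fin nB → ZMod 2) ℂ)) * Uᴴ)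
            (cc, m) (cb, mb)) := by
  simp_rw [normSq_psiYK, Finset.sum_comm (s := (Finset.univ : Finset (Fin nA → ZMod 2)))
      (t := (Finset.univ : Finset (Fin nC → ZMod 2))),
    sum_normSq_mul_pauli_kronecker_one_mul_conjTranspose_apply, ← Finset.mul_sum]
  field_simp

end psiYK

/-- With local Pauli-`Z` measurements on `D` and `D̄`, the probability of
outcome strings `m`, `m̄` equals `(1/d_D)(1/d_A²) N_s` with `s = m + m̄`
and `N_s = #{P_A : Λ_Z(P_A) = s}`. -/
theorem stmt17 (nA nB nC nD : ℕ)
    (U : Matrix ((Fin nC → ZMod 2) × (Fin nD → ZMod 2))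
      ((Fin nA → ZMod 2) × (Fin nB → ZMod 2)) ℂ)
    (hU1 : U * Uᴴ = 1) (hU2 : Uᴴ * U = 1)
    (c : (Fin nA → ZMod 2) → (Fin nA → ZMod 2) → ℂ)
    (xc zc : (Fin nA → ZMod 2) → (Fin nA → ZMod 2) → (Fin nC → ZMod 2))
    (xd zd : (Fin nA → ZMod 2) → (Fin nA → ZMod 2) → (Fin nD → ZMod 2))
    (hClif : ∀ x z : Fin nA → ZMod 2, ‖c x z‖ = 1 ∧
      U * (pauli x z ⊗ₖ (1 : Matrix (Fin nB → ZMod 2) (Fin nB → ZMod 2) ℂ)) * Uᴴ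
        = c x z • (pauli (xc x z) (zc x z) ⊗ₖ pauli (xd x z) (zd x z)))
    (s : (Fin nA → ZMod 2) → (Fin nA → ZMod 2) → (Fin nD → ZMod 2))
    (hs : ∀ (x z : Fin nA → ZMod 2) (j : Fin nD),
      pauli (xd x z) (zd x z) * zOp j
        = ((-1 : ℂ)) ^ ((s x z j).val) • (zOp j * pauli (xd x z) (zd x z)))
    (m mb : Fin nD → ZMod 2) :
    (∑ r : Fin nA → ZMod 2, ∑ cc : Fin nC → ZMod 2,
      ∑ cb : Fin nC → ZMod 2, ∑ rb : Fin nA → ZMod 2,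
        Complex.normSq (psiYK nA nB nC nD U r (cc, m) (mb, cb) rb))
      = (Fintype.card {PA : (Fin nA → ZMod 2) × (Fin nA → ZMod 2) //
            s PA.1 PA.2 = m + mb} : ℝ) / (2 ^ nD * (2 ^ nA) ^ 2) := by
  have hdim : (2 : ℝ) ^ nC * 2 ^ nD = 2 ^ nA * 2 ^ nB := by
    have hcard := Matrix.square_of_invertible U Uᴴ hU1 hU2
    simp only [Fintype.card_prod, Fintype.card_fun, ZMod.card, Fintype.card_fin] at hcard
    exact_mod_cast hcard
  have hs_eq_xd : ∀ x z, s x z = xd x z := fun x z =>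
    funext fun j => eq_apply_of_pauli_mul_zOp _ _ j _ (hs x z j)
  have hN : (Fintype.card {PA : (Fin nA → ZMod 2) × (Fin nA → ZMod 2) //
      s PA.1 PA.2 = m + mb} : ℝ) = ∑ x, ∑ z, if xd x z = m + mb then 1 else 0 := by
    rw [Fintype.card_subtype, Finset.card_filter, Fintype.sum_prod_type]
    push_cast
    simp_rw [hs_eq_xd]
  simp_rw [sum_normSq_psiYK, fun x z => (hClif x z).2,
    sum_normSq_smul_pauli_kronecker_pauli_apply _ (hClif _ _).1, ← Finset.mul_sum, ← hN]
  field_simp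
  rw [mul_right_comm, hdim]
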